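/- arXiv:1101.0239 — 7 statements merged into one kernel-verified Lean document; each statement's English description precedes it below -/
import Mathlib

section
/- Let (Ω, 𝒜) be a measurable space, P and Q probability measures on (Ω, 𝒜) with P ≪ Q and the Radon–Nikodym derivative dP/dQ essentially bounded (with respect to Q). Let X : Ω → ℝ be integrable with respect to both P and Q, and let φ be a real-valued convex function on an interval containing the range of X, with φ(X) integrable with respect to both P and Q. Then ∫ φ(X) dP − φ(∫ X dP) ≤ ‖dP/dQ‖_∞ · ( ∫ φ(X) dQ − φ(∫ X dQ) ). -/
/-!
Let `M = ‖dP/dQ‖_∞`. Since `dP/dQ ≤ M` a.e., `M • Q = P + R` with `R` the measure of density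
`M - dP/dQ ≥ 0`. The unnormalised Jensen gap `μ ↦ ∫ φ ∘ X dμ - μ(Ω) φ(⨍ X dμ)` is positively
homogeneous, nonnegative (Jensen) and superadditive (convexity of `φ` applied to the two averages).
Hence `M · gap(Q) = gap(P + R) ≥ gap(P) + gap(R) ≥ gap(P)`.
-/

open MeasureTheory Set Filter
open scoped ENNReal

theorem Convex.forall_le_or_forall_ge_of_notMem_interior {s : Set ℝ} (hs : Convex ℝ s) {m : ℝ}
    (hm : m ∉ interior s) : (∀ y ∈ s, m ≤ y) ∨ (∀ y ∈ s, y ≤ m) := by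
  by_contra! h
  obtain ⟨⟨a, has, ham⟩, ⟨b, hbs, hmb⟩⟩ := h
  exact hm <| mem_interior_iff_mem_nhds.2 <| mem_of_superset (Ioo_mem_nhds ham hmb)
    (Ioo_subset_Icc_self.trans (hs.ordConnected.out has hbs))

theorem ConvexOn.exists_affine_le_of_mem_interior {s : Set ℝ} {g : ℝ → ℝ} (hg : ConvexOn ℝ s g)
    {t : ℝ} (ht : t ∈ interior s) : ∃ c : ℝ, ∀ x ∈ s, g t + c * (x - t) ≤ g x := by
  refine ⟨derivWithin g (Ioi t) t, fun x hx => ?_⟩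
  rcases lt_trichotomy x t with hxt | rfl | htx
  · have := (hg.slope_le_leftDeriv_of_mem_interior hx ht hxt).trans
      (hg.leftDeriv_le_rightDeriv_of_mem_interior ht)
    rw [slope_def_field, div_le_iff₀ (sub_pos.2 hxt)] at this
    linarith
  · simp
  · have := hg.rightDeriv_le_slope_of_mem_interior ht hx htx
    rw [slope_def_field, le_div_iff₀ (sub_pos.2 htx)] at this
    linarith

section

variable {α : Type*} {m0 : MeasurableSpace α} {μ ν : Measure α} {s : Set ℝ} {f : α → ℝ}
  {g : ℝ → ℝ}

theorem MeasureTheory.Measure.smul_eq_withDensity_add_withDensity_sub {ρ : α → ℝ≥0∞} {c : ℝ≥0∞}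
    (hρ : Measurable ρ) (hρc : ∀ᵐ x ∂μ, ρ x ≤ c) :
    c • μ = μ.withDensity ρ + μ.withDensity (fun x => c - ρ x) := by
  rw [← withDensity_add_left hρ, ← withDensity_const]
  refine withDensity_congr_ae ?_
  filter_upwards [hρc] with x hx
  exact (add_tsub_cancel_of_le hx).symm

theorem average_smul_measure {E : Type*} [NormedAddCommGroup E] [NormedSpace ℝ E] (f : α → E)
    {c : ℝ≥0∞} (hc0 : c ≠ 0) (hc : c ≠ ⊤) : ⨍ x, f x ∂(c • μ) = ⨍ x, f x ∂μ := by
  have hc' : c.toReal ≠ 0 := ENNReal.toReal_ne_zero.2 ⟨hc0, hc⟩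
  rw [average_eq, average_eq, integral_smul_measure, measureReal_ennreal_smul_apply, smul_smul,
    mul_inv_rev, mul_assoc, inv_mul_cancel₀ hc', mul_one]

-- Unlike `ConvexOn.map_integral_le`, the one-dimensional Jensen inequality below needs neither
-- continuity of `g` nor closedness of `s`: if the mean is not interior to `s`, `f` is a.e. equal
-- to it.
theorem ae_eq_integral_of_forall_le_or_forall_ge [IsProbabilityMeasure μ]
    (hfs : ∀ᵐ x ∂μ, f x ∈ s) (hfi : Integrable f μ)
    (h : (∀ y ∈ s, ∫ x, f x ∂μ ≤ y) ∨ (∀ y ∈ s, y ≤ ∫ x, f x ∂μ)) :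
    f =ᵐ[μ] fun _ => ∫ x, f x ∂μ := by
  rcases h with h | h
  · refine ((integral_eq_iff_of_ae_le (integrable_const _) hfi ?_).1 (by simp)).symm
    filter_upwards [hfs] with x hx using h _ hx
  · refine (integral_eq_iff_of_ae_le hfi (integrable_const _) ?_).1 (by simp)
    filter_upwards [hfs] with x hx using h _ hx

theorem Convex.integral_mem_real [IsProbabilityMeasure μ] (hs : Convex ℝ s)
    (hfs : ∀ᵐ x ∂μ, f x ∈ s) (hfi : Integrable f μ) : ∫ x, f x ∂μ ∈ s := by
  by_contra hm
  have hconst := ae_eq_integral_of_forall_le_or_forall_ge hfs hfi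
    (hs.forall_le_or_forall_ge_of_notMem_interior fun h => hm (interior_subset h))
  obtain ⟨x, hxs, hx⟩ := (hfs.and hconst).exists
  rw [hx] at hxs
  exact hm hxs

theorem ConvexOn.map_integral_le_real [IsProbabilityMeasure μ] (hg : ConvexOn ℝ s g)
    (hfs : ∀ᵐ x ∂μ, f x ∈ s) (hfi : Integrable f μ) (hgi : Integrable (g ∘ f) μ) :
    g (∫ x, f x ∂μ) ≤ ∫ x, g (f x) ∂μ := by
  set m := ∫ x, f x ∂μ
  by_cases hm : m ∈ interior s
  · obtain ⟨c, hc⟩ := hg.exists_affine_le_of_mem_interior hm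
    have hlin : Integrable (fun x => c * (f x - m)) μ := (hfi.sub (integrable_const m)).const_mul c
    have hlin_zero : ∫ x, c * (f x - m) ∂μ = 0 := by
      rw [integral_const_mul, integral_sub hfi (integrable_const m)]
      simp [m]
    calc g m = ∫ x, (g m + c * (f x - m)) ∂μ := by
          rw [integral_add (integrable_const _) hlin, hlin_zero]
          simp
      _ ≤ ∫ x, g (f x) ∂μ := integral_mono_ae ((integrable_const _).add hlin) hgi
          (by filter_upwards [hfs] with x hx using hc _ hx)
  · have hconst := ae_eq_integral_of_forall_le_or_forall_ge hfs hfi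
      (hg.1.forall_le_or_forall_ge_of_notMem_interior hm)
    have : (fun x => g (f x)) =ᵐ[μ] fun _ => g m := hconst.fun_comp g
    rw [integral_congr_ae this]
    simp

theorem Convex.average_mem_real [IsFiniteMeasure μ] [NeZero μ] (hs : Convex ℝ s)
    (hfs : ∀ᵐ x ∂μ, f x ∈ s) (hfi : Integrable f μ) : ⨍ x, f x ∂μ ∈ s :=
  hs.integral_mem_real (Measure.ae_mono' Measure.smul_absolutelyContinuous hfs) hfi.to_average

theorem ConvexOn.map_average_le_real [IsFiniteMeasure μ] [NeZero μ] (hg : ConvexOn ℝ s g)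
    (hfs : ∀ᵐ x ∂μ, f x ∈ s) (hfi : Integrable f μ) (hgi : Integrable (g ∘ f) μ) :
    g (⨍ x, f x ∂μ) ≤ ⨍ x, g (f x) ∂μ :=
  hg.map_integral_le_real (Measure.ae_mono' Measure.smul_absolutelyContinuous hfs) hfi.to_average
    hgi.to_average

noncomputable def jensenGap (g : ℝ → ℝ) (f : α → ℝ) (μ : Measure α) : ℝ :=
  ∫ x, g (f x) ∂μ - μ.real univ * g (⨍ x, f x ∂μ)

theorem jensenGap_of_isProbabilityMeasure [IsProbabilityMeasure μ] :
    jensenGap g f μ = ∫ x, g (f x) ∂μ - g (∫ x, f x ∂μ) := by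
  simp [jensenGap, average_eq_integral]

@[simp]
theorem jensenGap_zero_measure : jensenGap g f (0 : Measure α) = 0 := by
  simp [jensenGap]

theorem jensenGap_nonneg [IsFiniteMeasure μ] (hg : ConvexOn ℝ s g) (hfs : ∀ᵐ x ∂μ, f x ∈ s)
    (hfi : Integrable f μ) (hgi : Integrable (g ∘ f) μ) : 0 ≤ jensenGap g f μ := by
  rcases eq_zero_or_neZero μ with rfl | _
  · simp
  have hJ : μ.real univ * g (⨍ x, f x ∂μ) ≤ ∫ x, g (f x) ∂μ :=
    calc μ.real univ * g (⨍ x, f x ∂μ) ≤ μ.real univ * ⨍ x, g (f x) ∂μ := by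
          gcongr
          exact hg.map_average_le_real hfs hfi hgi
      _ = ∫ x, g (f x) ∂μ := measure_smul_average μ _
  exact sub_nonneg.2 hJ

theorem jensenGap_smul_measure {c : ℝ≥0∞} (hc : c ≠ ⊤) :
    jensenGap g f (c • μ) = c.toReal * jensenGap g f μ := by
  rcases eq_or_ne c 0 with rfl | hc0
  · simp
  rw [jensenGap, jensenGap, integral_smul_measure, measureReal_ennreal_smul_apply,
    average_smul_measure f hc0 hc, smul_eq_mul]
  ring

theorem jensenGap_add_jensenGap_le [IsFiniteMeasure μ] [IsFiniteMeasure ν] (hg : ConvexOn ℝ s g)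
    (hfsμ : ∀ᵐ x ∂μ, f x ∈ s) (hfsν : ∀ᵐ x ∂ν, f x ∈ s)
    (hfiμ : Integrable f μ) (hfiν : Integrable f ν)
    (hgiμ : Integrable (g ∘ f) μ) (hgiν : Integrable (g ∘ f) ν) :
    jensenGap g f μ + jensenGap g f ν ≤ jensenGap g f (μ + ν) := by
  rcases eq_zero_or_neZero μ with rfl | _
  · simp
  rcases eq_zero_or_neZero ν with rfl | _
  · simp
  set a := μ.real univ
  set b := ν.real univ
  have ha : 0 < a := measureReal_univ_pos
  have hb : 0 < b := measureReal_univ_pos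
  have hconv := hg.2 (hg.1.average_mem_real hfsμ hfiμ) (hg.1.average_mem_real hfsν hfiν)
    (div_nonneg ha.le (add_pos ha hb).le) (div_nonneg hb.le (add_pos ha hb).le)
    (by field_simp)
  rw [← average_add_measure hfiμ hfiν] at hconv
  simp only [smul_eq_mul] at hconv
  have key : (a + b) * g (⨍ x, f x ∂(μ + ν)) ≤ a * g (⨍ x, f x ∂μ) + b * g (⨍ x, f x ∂ν) :=
    calc (a + b) * g (⨍ x, f x ∂(μ + ν))
        ≤ (a + b) * (a / (a + b) * g (⨍ x, f x ∂μ) + b / (a + b) * g (⨍ x, f x ∂ν)) := by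
          gcongr
      _ = a * g (⨍ x, f x ∂μ) + b * g (⨍ x, f x ∂ν) := by field_simp
  rw [jensenGap, jensenGap, jensenGap, integral_add_measure (f := fun x => g (f x)) hgiμ hgiν,
    measureReal_add_apply]
  linarith

end

theorem dragomir_jensen_upper {Ω : Type*} [MeasurableSpace Ω]
    (P Q : Measure Ω) [IsProbabilityMeasure P] [IsProbabilityMeasure Q]
    (hPQ : P ≪ Q) (hbdd : essSup (P.rnDeriv Q) Q ≠ ⊤)
    (X : Ω → ℝ) (hXP : Integrable X P) (hXQ : Integrable X Q)
    (s : Set ℝ) (φ : ℝ → ℝ) (hφ : ConvexOn ℝ s φ)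
    (hrange : ∀ ω, X ω ∈ s)
    (hφP : Integrable (fun ω => φ (X ω)) P)
    (hφQ : Integrable (fun ω => φ (X ω)) Q) :
    ∫ ω, φ (X ω) ∂P - φ (∫ ω, X ω ∂P) ≤
      (essSup (P.rnDeriv Q) Q).toReal *
        (∫ ω, φ (X ω) ∂Q - φ (∫ ω, X ω ∂Q)) := by
  set M := essSup (P.rnDeriv Q) Q
  set R := Q.withDensity fun ω => M - P.rnDeriv Q ω
  have hdecomp : M • Q = P + R := by
    rw [Measure.smul_eq_withDensity_add_withDensity_sub (Measure.measurable_rnDeriv P Q)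
      (ENNReal.ae_le_essSup _), Measure.withDensity_rnDeriv_eq P Q hPQ]
  have : IsFiniteMeasure (M • Q) := Q.smul_finite hbdd
  have hRle : R ≤ M • Q := hdecomp ▸ Measure.le_add_left le_rfl
  have : IsFiniteMeasure R := isFiniteMeasure_of_le _ hRle
  have hXs : ∀ μ : Measure Ω, ∀ᵐ ω ∂μ, X ω ∈ s := fun μ => ae_of_all μ hrange
  have hXR : Integrable X R := (hXQ.smul_measure hbdd).mono_measure hRle
  have hφR : Integrable (fun ω => φ (X ω)) R := (hφQ.smul_measure hbdd).mono_measure hRle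
  calc ∫ ω, φ (X ω) ∂P - φ (∫ ω, X ω ∂P)
        = jensenGap φ X P := jensenGap_of_isProbabilityMeasure.symm
    _ ≤ jensenGap φ X P + jensenGap φ X R :=
        le_add_of_nonneg_right (jensenGap_nonneg hφ (hXs R) hXR hφR)
    _ ≤ jensenGap φ X (P + R) := jensenGap_add_jensenGap_le hφ (hXs P) (hXs R) hXP hXR hφP hφR
    _ = M.toReal * (∫ ω, φ (X ω) ∂Q - φ (∫ ω, X ω ∂Q)) := by
        rw [← hdecomp, jensenGap_smul_measure hbdd, jensenGap_of_isProbabilityMeasure]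
end

section
/- Let (Ω, 𝒜) be a measurable space, P and Q probability measures with P ≪ Q, X : Ω → ℝ integrable with respect to both P and Q, and φ convex on an interval containing the range of X. If ∫ φ(X) dQ = φ(∫ X dQ), then ∫ φ(X) dP = φ(∫ X dP). -/
open MeasureTheory Filter Set

/-!
Unless `X` is `Q`-a.e. constant (and then also `P`-a.e. constant), the `Q`-mean `m` of `X` lies in
the interior of `s`, so `φ` has a supporting line `ℓ` at `m`. Equality in Jensen's inequality says
that the nonnegative gap `φ ∘ X - ℓ ∘ X` has `Q`-integral zero, so `φ ∘ X = ℓ ∘ X` holds `Q`-a.e.,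
hence `P`-a.e. The contact set `{φ ≤ ℓ}` is an interval carrying `P`-almost all values of `X`,
so it contains their `P`-mean, where therefore `φ = ℓ`; and `∫ φ ∘ X dP = ℓ (∫ X dP)`.
-/

lemma ConvexOn.add_rightDeriv_mul_sub_le {s : Set ℝ} {φ : ℝ → ℝ} (hφ : ConvexOn ℝ s φ)
    {x y : ℝ} (hx : x ∈ interior s) (hy : y ∈ s) :
    φ x + derivWithin φ (Ioi x) x * (y - x) ≤ φ y := by
  rcases lt_trichotomy y x with hyx | rfl | hxy
  · have hslope : slope φ y x ≤ derivWithin φ (Ioi x) x :=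
      (hφ.slope_le_leftDeriv_of_mem_interior hy hx hyx).trans
        (hφ.leftDeriv_le_rightDeriv_of_mem_interior hx)
    rw [slope_def_field, div_le_iff₀ (sub_pos.2 hyx)] at hslope
    linarith
  · simp
  · have hslope := hφ.rightDeriv_le_slope_of_mem_interior hx hy hxy
    rw [slope_def_field, le_div_iff₀ (sub_pos.2 hxy)] at hslope
    linarith

section Mean

variable {Ω : Type*} [MeasurableSpace Ω] {μ : Measure Ω} [IsProbabilityMeasure μ] {X : Ω → ℝ}

lemma integral_mul_add_const (a b : ℝ) (hX : Integrable X μ) :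
    ∫ ω, (a * X ω + b) ∂μ = a * ∫ ω, X ω ∂μ + b := by
  rw [integral_add (hX.const_mul a) (integrable_const b), integral_const_mul]
  simp

lemma ae_eq_integral_or_frequently_lt_and_gt (hX : Integrable X μ) :
    X =ᵐ[μ] (fun _ => ∫ ω, X ω ∂μ) ∨
      (∃ᵐ ω ∂μ, X ω < ∫ ω, X ω ∂μ) ∧ ∃ᵐ ω ∂μ, ∫ ω, X ω ∂μ < X ω := by
  set m := ∫ ω, X ω ∂μ
  have hm : ∫ _ : Ω, m ∂μ = m := by simp
  rw [or_iff_not_imp_right, not_and_or]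
  rintro (hlt | hgt)
  · simp only [not_frequently, not_lt] at hlt
    exact ((integral_eq_iff_of_ae_le (integrable_const m) hX hlt).1 hm).symm
  · simp only [not_frequently, not_lt] at hgt
    exact (integral_eq_iff_of_ae_le hX (integrable_const m) hgt).1 hm.symm

lemma integral_mem_of_ordConnected {s : Set ℝ} (hs : s.OrdConnected) (hX : Integrable X μ)
    (hXs : ∀ᵐ ω ∂μ, X ω ∈ s) : ∫ ω, X ω ∂μ ∈ s := by
  rcases ae_eq_integral_or_frequently_lt_and_gt hX with hconst | ⟨hlt, hgt⟩
  · obtain ⟨ω, hω, hωs⟩ := (hconst.and hXs).exists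
    rwa [hω] at hωs
  · obtain ⟨ω₁, h₁, h₁s⟩ := (hlt.and_eventually hXs).exists
    obtain ⟨ω₂, h₂, h₂s⟩ := (hgt.and_eventually hXs).exists
    exact hs.out h₁s h₂s ⟨h₁.le, h₂.le⟩

lemma ConvexOn.integral_comp_eq_of_ae_eq_affine_minorant {s : Set ℝ} {φ : ℝ → ℝ}
    (hφ : ConvexOn ℝ s φ) {a b : ℝ} (hle : ∀ x ∈ s, a * x + b ≤ φ x)
    (hXs : ∀ᵐ ω ∂μ, X ω ∈ s) (hX : Integrable X μ)
    (heq : ∀ᵐ ω ∂μ, φ (X ω) = a * X ω + b) :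
    ∫ ω, φ (X ω) ∂μ = φ (∫ ω, X ω ∂μ) := by
  have hcontact : Convex ℝ {x ∈ s | (φ - fun x => a * x + b) x ≤ 0} :=
    (hφ.sub (((LinearMap.mul ℝ ℝ a).concaveOn hφ.1).add_const b)).convex_le 0
  have hmean := integral_mem_of_ordConnected hcontact.ordConnected hX <| by
    filter_upwards [hXs, heq] with ω hωs hω
    exact ⟨hωs, by simp [hω]⟩
  rw [integral_congr_ae heq, integral_mul_add_const a b hX]
  exact le_antisymm (hle _ hmean.1) (by simpa [sub_nonpos] using hmean.2)

end Mean

theorem jensen_equality_transfer {Ω : Type*} [MeasurableSpace Ω]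
    (P Q : Measure Ω) [IsProbabilityMeasure P] [IsProbabilityMeasure Q]
    (hPQ : P ≪ Q)
    (X : Ω → ℝ) (hXP : Integrable X P) (hXQ : Integrable X Q)
    (s : Set ℝ) (φ : ℝ → ℝ) (hφ : ConvexOn ℝ s φ)
    (hrange : ∀ ω, X ω ∈ s)
    (hφQ : Integrable (fun ω => φ (X ω)) Q)
    (heq : ∫ ω, φ (X ω) ∂Q = φ (∫ ω, X ω ∂Q)) :
    ∫ ω, φ (X ω) ∂P = φ (∫ ω, X ω ∂P) := by
  set m := ∫ ω, X ω ∂Q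
  rcases ae_eq_integral_or_frequently_lt_and_gt hXQ with hconst | ⟨hlt, hgt⟩
  · have hconstP : X =ᵐ[P] fun _ => m := hPQ.ae_le hconst
    have hφconstP : (fun ω => φ (X ω)) =ᵐ[P] fun _ => φ m := hconstP.fun_comp φ
    rw [integral_congr_ae hconstP, integral_congr_ae hφconstP]
    simp
  obtain ⟨ω₁, h₁⟩ := hlt.exists
  obtain ⟨ω₂, h₂⟩ := hgt.exists
  have hm : m ∈ interior s := mem_interior_iff_mem_nhds.2 <|
    mem_of_superset (Icc_mem_nhds h₁ h₂) (hφ.1.ordConnected.out (hrange ω₁) (hrange ω₂))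
  set c := derivWithin φ (Ioi m) m
  have hle : ∀ x ∈ s, c * x + (φ m - c * m) ≤ φ x := fun x hx => by
    linarith [hφ.add_rightDeriv_mul_sub_le hm hx]
  have hQ : ∀ᵐ ω ∂Q, φ (X ω) = c * X ω + (φ m - c * m) := by
    have hℓQ : Integrable (fun ω => c * X ω + (φ m - c * m)) Q :=
      (hXQ.const_mul c).add (integrable_const _)
    refine ((integral_eq_iff_of_ae_le hℓQ hφQ
      (ae_of_all _ fun ω => hle _ (hrange ω))).1 ?_).symm
    rw [integral_mul_add_const _ _ hXQ, heq]
    ring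
  exact hφ.integral_comp_eq_of_ae_eq_affine_minorant hle (ae_of_all _ hrange) hXP (hPQ.ae_le hQ)
end

section
/- Let P and Q be probability measures on (Ω, 𝒜) with P ≪ Q, X : Ω → ℝ integrable with respect to both P and Q, and φ convex on an interval containing the range of X with φ(X) integrable with respect to both P and Q. Then (ess inf_Q dP/dQ) · ( ∫ φ(X) dQ − φ(∫ X dQ) ) ≤ ∫ φ(X) dP − φ(∫ X dP). -/
/-!
Let `r` be the essential infimum of `dP/dQ`, so that `r • Q ≤ P`, and let `ℓ` be a supporting
line of `φ` at `p = ∫ X dP`. The function `φ ∘ X - ℓ ∘ X` is nonnegative, its `P`-integral is the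
Jensen gap under `P`, and its `Q`-integral dominates the Jensen gap under `Q` because `ℓ ≤ φ` at
`∫ X dQ`; comparing the two integrals through `r • Q ≤ P` gives the inequality. A supporting line
exists as soon as `p` is interior to `s`; otherwise `X = p` holds `P`-a.e., and then either
`r = 0` or `Q ≪ P`, so that both gaps vanish.
-/

open MeasureTheory Set

namespace ConvexOn

theorem add_rightDeriv_mul_sub_le_s7 {S : Set ℝ} {f : ℝ → ℝ} (hf : ConvexOn ℝ S f) {x y : ℝ}
    (hx : x ∈ interior S) (hy : y ∈ S) :
    f x + derivWithin f (Ioi x) x * (y - x) ≤ f y := by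
  rcases lt_trichotomy y x with hyx | rfl | hxy
  · have hslope := (hf.slope_le_leftDeriv_of_mem_interior hy hx hyx).trans
      (hf.leftDeriv_le_rightDeriv_of_mem_interior hx)
    rw [slope_def_field, div_le_iff₀ (sub_pos.2 hyx)] at hslope
    linarith
  · simp
  · have hslope := hf.rightDeriv_le_slope_of_mem_interior hx hy hxy
    rw [slope_def_field, le_div_iff₀ (sub_pos.2 hxy)] at hslope
    linarith

end ConvexOn

namespace MeasureTheory

theorem Measure.smul_le_of_le_essInf_rnDeriv {α : Type*} [MeasurableSpace α]
    {μ ν : Measure α} {c : ENNReal} (hc : c ≤ essInf (μ.rnDeriv ν) ν) : c • ν ≤ μ :=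
  calc c • ν = ν.withDensity fun _ ↦ c := (withDensity_const c).symm
    _ ≤ ν.withDensity (μ.rnDeriv ν) := withDensity_mono <| by
      filter_upwards [ae_essInf_le (f := μ.rnDeriv ν)] with a ha using hc.trans ha
    _ ≤ μ := Measure.withDensity_rnDeriv_le μ ν

variable {Ω : Type*} [MeasurableSpace Ω] {μ : Measure Ω} {f : Ω → ℝ}

theorem exists_lt_integral_of_not_ae_eq_const [IsProbabilityMeasure μ] (hf : Integrable f μ)
    (hconst : ¬ f =ᵐ[μ] fun _ => ∫ ω, f ω ∂μ) : ∃ ω, f ω < ∫ ω, f ω ∂μ := by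
  by_contra! hge
  refine hconst ((integral_eq_iff_of_ae_le (integrable_const _) hf (ae_of_all _ hge)).1 ?_).symm
  simp

theorem exists_integral_lt_of_not_ae_eq_const [IsProbabilityMeasure μ] (hf : Integrable f μ)
    (hconst : ¬ f =ᵐ[μ] fun _ => ∫ ω, f ω ∂μ) : ∃ ω, ∫ ω, f ω ∂μ < f ω := by
  by_contra! hle
  refine hconst ((integral_eq_iff_of_ae_le hf (integrable_const _) (ae_of_all _ hle)).1 ?_)
  simp

theorem _root_.Set.OrdConnected.integral_mem [IsProbabilityMeasure μ] {s : Set ℝ}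
    (hs : s.OrdConnected) (hfs : ∀ ω, f ω ∈ s) (hf : Integrable f μ) : ∫ ω, f ω ∂μ ∈ s := by
  obtain ⟨ω₁, h₁⟩ := exists_le_integral hf
  obtain ⟨ω₂, h₂⟩ := exists_integral_le hf
  exact hs.out (hfs ω₁) (hfs ω₂) ⟨h₁, h₂⟩

theorem _root_.Set.OrdConnected.integral_mem_interior_of_not_ae_eq_const
    [IsProbabilityMeasure μ] {s : Set ℝ} (hs : s.OrdConnected) (hfs : ∀ ω, f ω ∈ s)
    (hf : Integrable f μ) (hconst : ¬ f =ᵐ[μ] fun _ => ∫ ω, f ω ∂μ) :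
    ∫ ω, f ω ∂μ ∈ interior s := by
  obtain ⟨ω₁, h₁⟩ := exists_lt_integral_of_not_ae_eq_const hf hconst
  obtain ⟨ω₂, h₂⟩ := exists_integral_lt_of_not_ae_eq_const hf hconst
  exact interior_mono (hs.out (hfs ω₁) (hfs ω₂)) (by rw [interior_Icc]; exact ⟨h₁, h₂⟩)

theorem integral_comp_eq_of_ae_eq_const [IsProbabilityMeasure μ] {φ : ℝ → ℝ} {c : ℝ}
    (hf : f =ᵐ[μ] fun _ => c) : ∫ ω, φ (f ω) ∂μ = φ c :=
  (integral_congr_ae (hf.fun_comp φ)).trans (by simp)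

theorem mul_integral_le_integral_of_smul_le {ν : Measure Ω} {r : ℝ} (hr : 0 ≤ r)
    (hle : ENNReal.ofReal r • ν ≤ μ) (hf : 0 ≤ᵐ[μ] f) (hfi : Integrable f μ) :
    r * ∫ ω, f ω ∂ν ≤ ∫ ω, f ω ∂μ := by
  have := integral_mono_measure hle hf hfi
  rwa [integral_smul_measure, ENNReal.toReal_ofReal hr, smul_eq_mul] at this

theorem integral_add_mul_sub [IsProbabilityMeasure μ] (hf : Integrable f μ) (a b c : ℝ) :
    ∫ ω, (a + b * (f ω - c)) ∂μ = a + b * (∫ ω, f ω ∂μ - c) := by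
  rw [integral_add (integrable_const a) (by fun_prop), integral_const_mul,
    integral_sub hf (integrable_const c)]
  simp

section JensenGap

variable {P Q : Measure Ω} [IsProbabilityMeasure P] [IsProbabilityMeasure Q] {X : Ω → ℝ}
  {φ : ℝ → ℝ} {r : ℝ}

theorem mul_jensen_gap_le_of_ae_eq_const (hr : 0 ≤ r) (hle : ENNReal.ofReal r • Q ≤ P)
    (hconst : X =ᵐ[P] fun _ => ∫ ω, X ω ∂P) :
    r * (∫ ω, φ (X ω) ∂Q - φ (∫ ω, X ω ∂Q)) ≤ ∫ ω, φ (X ω) ∂P - φ (∫ ω, X ω ∂P) := by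
  rw [integral_comp_eq_of_ae_eq_const hconst, sub_self]
  rcases hr.eq_or_lt with rfl | hr_pos
  · simp
  have hQP : Q ≪ P :=
    (Measure.absolutelyContinuous_smul (ENNReal.ofReal_pos.2 hr_pos).ne').trans
      (Measure.absolutelyContinuous_of_le hle)
  have hconstQ := hQP.ae_le hconst
  have hmean : ∫ ω, X ω ∂Q = ∫ ω, X ω ∂P := integral_comp_eq_of_ae_eq_const (φ := id) hconstQ
  rw [integral_comp_eq_of_ae_eq_const hconstQ, hmean, sub_self, mul_zero]

theorem mul_jensen_gap_le_of_smul_le {s : Set ℝ} (hr : 0 ≤ r) (hle : ENNReal.ofReal r • Q ≤ P)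
    (hXP : Integrable X P) (hXQ : Integrable X Q) (hφ : ConvexOn ℝ s φ) (hXs : ∀ ω, X ω ∈ s)
    (hφP : Integrable (fun ω => φ (X ω)) P) (hφQ : Integrable (fun ω => φ (X ω)) Q) :
    r * (∫ ω, φ (X ω) ∂Q - φ (∫ ω, X ω ∂Q)) ≤ ∫ ω, φ (X ω) ∂P - φ (∫ ω, X ω ∂P) := by
  set p := ∫ ω, X ω ∂P
  by_cases hconst : X =ᵐ[P] fun _ => p
  · exact mul_jensen_gap_le_of_ae_eq_const hr hle hconst
  have hp : p ∈ interior s :=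
    hφ.1.ordConnected.integral_mem_interior_of_not_ae_eq_const hXs hXP hconst
  set t := derivWithin φ (Ioi p) p
  have hsupport : ∀ x ∈ s, φ p + t * (x - p) ≤ φ x :=
    fun x hx ↦ hφ.add_rightDeriv_mul_sub_le_s7 hp hx
  have hsupport_Q := hsupport _ (hφ.1.ordConnected.integral_mem hXs hXQ)
  calc r * (∫ ω, φ (X ω) ∂Q - φ (∫ ω, X ω ∂Q))
      ≤ r * ∫ ω, (φ (X ω) - (φ p + t * (X ω - p))) ∂Q := by
        rw [integral_sub hφQ (by fun_prop), integral_add_mul_sub hXQ]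
        exact mul_le_mul_of_nonneg_left (by linarith) hr
    _ ≤ ∫ ω, (φ (X ω) - (φ p + t * (X ω - p))) ∂P :=
        mul_integral_le_integral_of_smul_le hr hle
          (ae_of_all _ fun ω ↦ sub_nonneg.2 (hsupport _ (hXs ω))) (hφP.sub (by fun_prop))
    _ = ∫ ω, φ (X ω) ∂P - φ p := by
        rw [integral_sub hφP (by fun_prop), integral_add_mul_sub hXP, sub_self, mul_zero,
          add_zero]

end JensenGap

end MeasureTheory

theorem dragomir_jensen_lower_general {Ω : Type*} [MeasurableSpace Ω]
    (P Q : Measure Ω) [IsProbabilityMeasure P] [IsProbabilityMeasure Q]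
    (X : Ω → ℝ) (hXP : Integrable X P) (hXQ : Integrable X Q)
    (s : Set ℝ) (φ : ℝ → ℝ) (hφ : ConvexOn ℝ s φ)
    (hrange : ∀ ω, X ω ∈ s)
    (hφP : Integrable (fun ω => φ (X ω)) P)
    (hφQ : Integrable (fun ω => φ (X ω)) Q) :
    (essInf (P.rnDeriv Q) Q).toReal *
        (∫ ω, φ (X ω) ∂Q - φ (∫ ω, X ω ∂Q)) ≤
      ∫ ω, φ (X ω) ∂P - φ (∫ ω, X ω ∂P) := by
  have hle : ENNReal.ofReal (essInf (P.rnDeriv Q) Q).toReal • Q ≤ P :=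
    Measure.smul_le_of_le_essInf_rnDeriv ENNReal.ofReal_toReal_le
  exact mul_jensen_gap_le_of_smul_le ENNReal.toReal_nonneg hle hXP hXQ hφ hrange hφP hφQ

theorem dragomir_jensen_lower {Ω : Type*} [MeasurableSpace Ω]
    (P Q : Measure Ω) [IsProbabilityMeasure P] [IsProbabilityMeasure Q]
    (hPQ : P ≪ Q)
    (X : Ω → ℝ) (hXP : Integrable X P) (hXQ : Integrable X Q)
    (s : Set ℝ) (φ : ℝ → ℝ) (hφ : ConvexOn ℝ s φ)
    (hrange : ∀ ω, X ω ∈ s)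
    (hφP : Integrable (fun ω => φ (X ω)) P)
    (hφQ : Integrable (fun ω => φ (X ω)) Q) :
    (essInf (P.rnDeriv Q) Q).toReal *
        (∫ ω, φ (X ω) ∂Q - φ (∫ ω, X ω ∂Q)) ≤
      ∫ ω, φ (X ω) ∂P - φ (∫ ω, X ω ∂P) :=
  dragomir_jensen_lower_general P Q X hXP hXQ s φ hφ hrange hφP hφQ
end

section
/- There exist a probability space (Ω, 𝒜), probability measures P and Q on it with P not absolutely continuous with respect to Q, and an integrable function X : Ω → ℝ such that P ≪ Q holds when both measures are restricted to the set {X ≠ 0}, the restricted Radon–Nikodym derivative is bounded there, yet with φ(t) = t², one has ∫ X² dP − (∫ X dP)² > ‖dP/dQ‖_{∞, {X≠0}} · ( ∫ X² dQ − (∫ X dQ)² ). Concretely: Ω = [0,1] with Lebesgue measurable sets, dP = dx (Lebesgue measure), X = χ_{[1/2,1]}, dQ = 2·χ_{[1/2,1]} dx; then the right-hand side is 0 while the left-hand side is 1/4. -/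
/-!
On `{X ≠ 0} = [1/2, 1]` both `P` and `Q` are multiples of Lebesgue measure, `Q = 2 P` there, so
the restricted density is the constant `1/2`. But `Q` lives entirely on `[1/2, 1]`, where `X = 1`,
so `X` has `Q`-variance `0`, while under `P` it is a Bernoulli(1/2) variable with variance `1/4`.
The mass that `P` puts on `[0, 1/2)`, a `Q`-null set, is what breaks `P ≪ Q`.
-/

open MeasureTheory Measure Set
open scoped ENNReal

lemma Set.support_indicator_const {α M : Type*} [Zero M] {s : Set α} {c : M} (hc : c ≠ 0) :
    Function.support (s.indicator fun _ => c) = s := by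
  rw [support_indicator, Function.support_const hc, inter_univ]

section

variable {α : Type*} [MeasurableSpace α]

lemma MeasureTheory.Measure.withDensity_indicator_const (μ : Measure α) {s : Set α}
    (hs : MeasurableSet s) (c : ℝ≥0∞) :
    μ.withDensity (s.indicator fun _ => c) = c • μ.restrict s := by
  rw [withDensity_indicator hs, withDensity_const]

lemma MeasureTheory.isProbabilityMeasure_smul_restrict {μ : Measure α} {s : Set α} {c : ℝ≥0∞}
    (hc₀ : c ≠ 0) (hc : c ≠ ∞) (hs : μ s = c⁻¹) : IsProbabilityMeasure (c • μ.restrict s) :=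
  ⟨by simp [hs, ENNReal.mul_inv_cancel hc₀ hc]⟩

lemma MeasureTheory.Measure.not_restrict_absolutelyContinuous_smul_restrict {μ : Measure α}
    {s t : Set α} (hs : MeasurableSet s) (c : ℝ≥0∞) (h : μ (t \ s) ≠ 0) :
    ¬ μ.restrict t ≪ c • μ.restrict s := fun hac => h <| by
  have hnull : (c • μ.restrict s) (t \ s) = 0 := by simp [restrict_apply' hs]
  have hle : μ (t \ s ∩ t) ≤ μ.restrict t (t \ s) := le_restrict_apply _ _
  rwa [hac hnull, inter_eq_left.2 sdiff_subset, nonpos_iff_eq_zero] at hle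

lemma MeasureTheory.Measure.essSup_rnDeriv_smul_self (μ : Measure α) [SigmaFinite μ] [NeZero μ]
    {c : ℝ≥0∞} (hc₀ : c ≠ 0) (hc : c ≠ ∞) : essSup (μ.rnDeriv (c • μ)) (c • μ) = c⁻¹ := by
  have h : μ.rnDeriv (c • μ) =ᵐ[μ] fun _ => c⁻¹ := by
    filter_upwards [rnDeriv_smul_right_of_ne_top' μ μ hc₀ hc, rnDeriv_self μ] with x hx hx'
    simp [hx, hx']
  rw [essSup_ennreal_smul_measure hc₀, essSup_congr_ae h, essSup_const']

lemma MeasureTheory.integral_sq_sub_sq_integral_indicator_one (μ : Measure α) {s : Set α}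
    (hs : MeasurableSet s) :
    ∫ x, (s.indicator (1 : α → ℝ) x) ^ 2 ∂μ - (∫ x, s.indicator (1 : α → ℝ) x ∂μ) ^ 2 =
      μ.real s * (1 - μ.real s) := by
  have hsq : (fun x => (s.indicator (1 : α → ℝ) x) ^ 2) = s.indicator 1 := by
    ext x; by_cases hx : x ∈ s <;> simp [hx]
  rw [hsq, integral_indicator_one hs]
  ring

end

theorem counterexample_ac_on_support_insufficient :
    let P : Measure ℝ := volume.restrict (Set.Icc 0 1)
    let Q : Measure ℝ := volume.withDensity ((Set.Icc (1/2 : ℝ) 1).indicator fun _ => 2)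
    let X : ℝ → ℝ := (Set.Icc (1/2 : ℝ) 1).indicator fun _ => 1
    IsProbabilityMeasure P ∧ IsProbabilityMeasure Q ∧
    ¬ P ≪ Q ∧ Integrable X P ∧
    P.restrict {x | X x ≠ 0} ≪ Q.restrict {x | X x ≠ 0} ∧
    essSup ((P.restrict {x | X x ≠ 0}).rnDeriv (Q.restrict {x | X x ≠ 0}))
      (Q.restrict {x | X x ≠ 0}) = 1/2 ∧
    ∫ x, (X x)^2 ∂P - (∫ x, X x ∂P)^2 >
      (1/2 : ℝ) * (∫ x, (X x)^2 ∂Q - (∫ x, X x ∂Q)^2) := by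
  intro P Q X
  set S := Icc (1/2 : ℝ) 1
  have hS : MeasurableSet S := measurableSet_Icc
  have hvolS : volume S = 2⁻¹ := by
    rw [Real.volume_Icc, show (1 : ℝ) - 1 / 2 = 2⁻¹ by norm_num, ENNReal.ofReal_inv_of_pos two_pos,
      ENNReal.ofReal_ofNat]
  have hgap : volume (Icc 0 1 \ S) ≠ 0 := fun h => by
    have hsub : Ico (0 : ℝ) (1/2) ⊆ Icc 0 1 \ S :=
      fun x hx => ⟨Ico_subset_Icc_self.trans (Icc_subset_Icc_right (by norm_num)) hx,
        fun hxS => hx.2.not_ge hxS.1⟩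
    simpa using measure_mono_null hsub h
  have hsupp : {x | X x ≠ 0} = S := support_indicator_const one_ne_zero
  have hQ : Q = (2 : ℝ≥0∞) • volume.restrict S := withDensity_indicator_const volume hS 2
  have hPS : P.restrict S = volume.restrict S :=
    restrict_restrict_of_subset (Icc_subset_Icc_left (by norm_num))
  have hQS : Q.restrict S = Q := by rw [hQ, restrict_smul, restrict_restrict_of_subset subset_rfl]
  have hPprob : IsProbabilityMeasure P := ⟨by simp [P]⟩
  have hQprob : IsProbabilityMeasure Q :=
    hQ ▸ isProbabilityMeasure_smul_restrict two_ne_zero ENNReal.ofNat_ne_top (by simpa using hvolS)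
  have hPS_real : P.real S = 2⁻¹ := by
    rw [measureReal_def, ← restrict_apply_univ, hPS, restrict_apply_univ, hvolS]; norm_num
  have hQS_real : Q.real S = 1 := by
    rw [measureReal_def, ← restrict_apply_univ, hQS, measure_univ, ENNReal.toReal_one]
  have : NeZero (volume.restrict S) := ⟨by simp [hvolS]⟩
  refine ⟨hPprob, hQprob, hQ ▸ not_restrict_absolutelyContinuous_smul_restrict hS 2 hgap,
    (integrable_const (1 : ℝ)).indicator hS, ?_, ?_, ?_⟩
  · rw [hsupp, hPS, hQS, hQ]
    exact absolutelyContinuous_smul two_ne_zero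
  · rw [hsupp, hPS, hQS, hQ, essSup_rnDeriv_smul_self _ two_ne_zero ENNReal.ofNat_ne_top]
    norm_num
  · rw [show X = S.indicator 1 from rfl, integral_sq_sub_sq_integral_indicator_one P hS,
      integral_sq_sub_sq_integral_indicator_one Q hS, hPS_real, hQS_real]
    norm_num
end

section
/- Fix p ∈ [1, ∞). Let Q be Lebesgue measure on (0,1], X(t) = t^{−1/2 + 1/(4p)}, and dP(t) = C·t^{−1/(2p)} dt where C = 1 − 1/(2p) normalizes P to a probability. Then X ∈ L¹(P) ∩ L¹(Q), ∫ X² dQ < ∞, ‖dP/dQ‖_{L^p(Q)} < ∞, but ∫ X² dP = ∞. Consequently, ∫ X² dP − (∫ X dP)² = ∞ > c · ‖dP/dQ‖_{L^p(Q)} · ( ∫ X² dQ − (∫ X dQ)² ) for every constant c > 0. -/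
/-!
Everything reduces to the fact that `t ^ r` is integrable on `(0, 1]` exactly when `r > -1`.
The density of `P` is `c t^(-1/(2p))`, whose `p`-th power `c^p t^(-1/2)` is integrable, while
`X² = t^(-1 + 1/(2p))` is chosen so that `X² dP = c t⁻¹ dt`, which is not.
-/

open MeasureTheory Set Real
open scoped ENNReal

lemma integrableOn_Ioc_zero_one_rpow_iff {r : ℝ} :
    IntegrableOn (fun t : ℝ => t ^ r) (Ioc 0 1) ↔ -1 < r := by
  rw [integrableOn_Ioc_iff_integrableOn_Ioo (by simp),
    intervalIntegral.integrableOn_Ioo_rpow_iff zero_lt_one]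

lemma setIntegral_Ioc_zero_one_rpow {r : ℝ} (hr : -1 < r) :
    ∫ t in Ioc (0 : ℝ) 1, t ^ r = (r + 1)⁻¹ := by
  rw [← intervalIntegral.integral_of_le zero_le_one, integral_rpow (Or.inl hr), one_rpow,
    zero_rpow (by linarith), sub_zero, one_div]

lemma setLIntegral_Ioc_zero_one_ofReal_rpow_lt_top_iff {r : ℝ} :
    ∫⁻ t in Ioc (0 : ℝ) 1, ENNReal.ofReal (t ^ r) < ∞ ↔ -1 < r := by
  rw [← integrableOn_Ioc_zero_one_rpow_iff, IntegrableOn,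
    ← lintegral_ofReal_ne_top_iff_integrable (by fun_prop), lt_top_iff_ne_top]
  filter_upwards [ae_restrict_mem measurableSet_Ioc] with t ht
  exact rpow_nonneg ht.1.le r

lemma setLIntegral_Ioc_zero_one_ofReal_rpow {r : ℝ} (hr : -1 < r) :
    ∫⁻ t in Ioc (0 : ℝ) 1, ENNReal.ofReal (t ^ r) = ENNReal.ofReal (r + 1)⁻¹ := by
  rw [← setIntegral_Ioc_zero_one_rpow hr, ofReal_integral_eq_lintegral_ofReal
    (integrableOn_Ioc_zero_one_rpow_iff.2 hr)]
  filter_upwards [ae_restrict_mem measurableSet_Ioc] with t ht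
  exact rpow_nonneg ht.1.le r

noncomputable def powerMeasure (c b : ℝ) : Measure ℝ :=
  (volume.restrict (Ioc 0 1)).withDensity fun t => ENNReal.ofReal (c * t ^ b)

section powerMeasure

variable {a b c : ℝ}

lemma rnDeriv_powerMeasure :
    (powerMeasure c b).rnDeriv (volume.restrict (Ioc 0 1)) =ᵐ[volume.restrict (Ioc 0 1)]
      fun t => ENNReal.ofReal (c * t ^ b) :=
  Measure.rnDeriv_withDensity _ (by fun_prop)

lemma lintegral_powerMeasure_of_eqOn {f : ℝ → ℝ} (hc : 0 ≤ c)
    (hf : EqOn f (· ^ a) (Ioc 0 1)) :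
    ∫⁻ t, ENNReal.ofReal (f t) ∂powerMeasure c b =
      ENNReal.ofReal c * ∫⁻ t in Ioc (0 : ℝ) 1, ENNReal.ofReal (t ^ (a + b)) := by
  rw [powerMeasure, lintegral_withDensity_eq_lintegral_mul_non_measurable _ (by fun_prop)
    (by simp), ← lintegral_const_mul _ (by fun_prop)]
  refine setLIntegral_congr_fun measurableSet_Ioc fun t ht => ?_
  rw [Pi.mul_apply, hf ht, ← ENNReal.ofReal_mul hc,
    ← ENNReal.ofReal_mul (mul_nonneg hc (rpow_nonneg ht.1.le b)), rpow_add ht.1]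
  congr 1
  ring

lemma powerMeasure_univ (hb : -1 < b) (hc : 0 ≤ c) :
    powerMeasure c b univ = ENNReal.ofReal (c / (b + 1)) := by
  rw [← lintegral_one, ← ENNReal.ofReal_one,
    lintegral_powerMeasure_of_eqOn (a := 0) hc fun t ht => (rpow_zero t).symm, zero_add,
    setLIntegral_Ioc_zero_one_ofReal_rpow hb, ← ENNReal.ofReal_mul hc, div_eq_mul_inv]

lemma integrable_rpow_powerMeasure (hc : 0 ≤ c) (hab : -1 < a + b) :
    Integrable (fun t => t ^ a) (powerMeasure c b) := by
  rw [powerMeasure, integrable_withDensity_iff (by fun_prop) (by simp)]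
  have h : IntegrableOn (fun t => c * t ^ (a + b)) (Ioc 0 1) :=
    (integrableOn_Ioc_zero_one_rpow_iff.2 hab).const_mul c
  refine h.congr_fun (fun t ht => ?_) measurableSet_Ioc
  dsimp only
  rw [ENNReal.toReal_ofReal (mul_nonneg hc (rpow_nonneg ht.1.le b)), rpow_add ht.1]
  ring

lemma lintegral_rnDeriv_powerMeasure_rpow_lt_top {p : ℝ} (hc : 0 ≤ c) (hp : 0 ≤ p)
    (hbp : -1 < b * p) :
    ∫⁻ t, (powerMeasure c b).rnDeriv (volume.restrict (Ioc 0 1)) t ^ p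
      ∂volume.restrict (Ioc 0 1) < ∞ := by
  have hpow : ∀ t ∈ Ioc (0 : ℝ) 1,
      ENNReal.ofReal (c * t ^ b) ^ p = ENNReal.ofReal (c ^ p) * ENNReal.ofReal (t ^ (b * p)) := by
    intro t ht
    rw [ENNReal.ofReal_rpow_of_nonneg (mul_nonneg hc (rpow_nonneg ht.1.le b)) hp,
      mul_rpow hc (rpow_nonneg ht.1.le b), ← rpow_mul ht.1.le,
      ENNReal.ofReal_mul (rpow_nonneg hc p)]
  calc _ = ∫⁻ t in Ioc (0 : ℝ) 1, ENNReal.ofReal (c ^ p) * ENNReal.ofReal (t ^ (b * p)) := by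
        refine lintegral_congr_ae ?_
        filter_upwards [rnDeriv_powerMeasure, ae_restrict_mem measurableSet_Ioc] with t hrn ht
        rw [hrn, hpow t ht]
    _ < ∞ := by
      rw [lintegral_const_mul _ (by fun_prop)]
      exact ENNReal.mul_lt_top ENNReal.ofReal_lt_top
        (setLIntegral_Ioc_zero_one_ofReal_rpow_lt_top_iff.2 hbp)

end powerMeasure

theorem lp_norm_insufficient (p : ℝ) (hp : 1 ≤ p) :
    let Q : Measure ℝ := volume.restrict (Set.Ioc 0 1)
    let X : ℝ → ℝ := fun t => t ^ (-(1/2 : ℝ) + 1/(4*p))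
    let P : Measure ℝ := Q.withDensity
      (fun t => ENNReal.ofReal ((1 - 1/(2*p)) * t ^ (-(1/(2*p) : ℝ))))
    IsProbabilityMeasure P ∧
    Integrable X P ∧ Integrable X Q ∧
    Integrable (fun t => (X t)^2) Q ∧
    (∫⁻ t, (P.rnDeriv Q t) ^ p ∂Q) < ⊤ ∧
    (∫⁻ t, ENNReal.ofReal ((X t)^2) ∂P) = ⊤ ∧
    ∀ c : ℝ, 0 < c →
      ENNReal.ofReal (c * (∫ t, (X t)^2 ∂Q - (∫ t, X t ∂Q)^2)) <
        ∫⁻ t, ENNReal.ofReal ((X t)^2) ∂P := by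
  intro Q X P
  have hP : P = powerMeasure (1 - 1/(2*p)) (-(1/(2*p))) := rfl
  have hq₀ : 0 < 1/(2*p) := by positivity
  have hq₁ : 1/(2*p) ≤ 1/2 := one_div_le_one_div_of_le two_pos (by linarith)
  have hq₂ : 1/(4*p) = 1/(2*p) / 2 := by ring
  have hc : 0 < 1 - 1/(2*p) := by linarith
  have hX2 : EqOn (fun t => X t ^ 2) (· ^ (-1 + 1/(2*p))) (Ioc 0 1) := fun t ht => by
    simp only [X]
    rw [← rpow_natCast, ← rpow_mul ht.1.le]
    congr 1
    push_cast
    linarith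
  have hXP : ∫⁻ t, ENNReal.ofReal (X t ^ 2) ∂P = ∞ := by
    rw [hP, lintegral_powerMeasure_of_eqOn hc.le hX2, add_neg_cancel_right,
      not_lt_top_iff.1 (mt setLIntegral_Ioc_zero_one_ofReal_rpow_lt_top_iff.1 (lt_irrefl _)),
      ENNReal.mul_top (ENNReal.ofReal_pos.2 hc).ne']
  refine ⟨⟨?_⟩, integrable_rpow_powerMeasure hc.le (by linarith),
    integrableOn_Ioc_zero_one_rpow_iff.2 (by linarith),
    (integrableOn_Ioc_zero_one_rpow_iff.2 (by linarith)).congr_fun hX2.symm measurableSet_Ioc,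
    lintegral_rnDeriv_powerMeasure_rpow_lt_top hc.le (by linarith) ?_, hXP,
    fun c _ => hXP ▸ ENNReal.ofReal_lt_top⟩
  · rw [hP, powerMeasure_univ (by linarith) hc.le, sub_eq_neg_add, div_self (by linarith),
      ENNReal.ofReal_one]
  · field_simp
    norm_num
end

section
/- Let 0 < σ₁ ≤ σ₂ and let g : ℝ → ℝ be a bounded measurable function with g square-integrable against both N(0,σ₁²) and N(0,σ₂²). Write Var_i(g) := ∫ g² dN(0,σ_i²) − (∫ g dN(0,σ_i²))² for i = 1, 2. Then Var₁(g) ≤ (σ₂/σ₁) · Var₂(g). -/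
/-!
When `σ₁ ≤ σ₂` the density ratio `dN(m, σ₁²) / dN(m, σ₂²)` is bounded by `σ₂ / σ₁`, so
`N(m, σ₁²) ≤ (σ₂ / σ₁) • N(m, σ₂²)`. A variance is the least second moment about a constant, hence,
with `m₂` the mean of `g` under `N(0, σ₂²)`,
`Var₁ g ≤ ∫ (g - m₂)² dN(0, σ₁²) ≤ (σ₂ / σ₁) ∫ (g - m₂)² dN(0, σ₂²) = (σ₂ / σ₁) Var₂ g`.
-/

open MeasureTheory ProbabilityTheory Real
open scoped NNReal

namespace MeasureTheory

lemma integral_le_mul_integral_of_le_smul {α : Type*} [MeasurableSpace α] {μ ν : Measure α}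
    {c : ℝ≥0} (hμν : μ ≤ c • ν) {f : α → ℝ} (hf : 0 ≤ᵐ[ν] f) (hfi : Integrable f ν) :
    ∫ x, f x ∂μ ≤ c * ∫ x, f x ∂ν := by
  calc ∫ x, f x ∂μ ≤ ∫ x, f x ∂(c • ν) :=
        integral_mono_measure hμν (Measure.ae_smul_measure hf c) hfi.smul_measure_nnreal
    _ = c * ∫ x, f x ∂ν := by rw [integral_smul_nnreal_measure, NNReal.smul_def, smul_eq_mul]

end MeasureTheory

namespace ProbabilityTheory

variable {Ω : Type*} [MeasurableSpace Ω] {μ : Measure Ω} [IsProbabilityMeasure μ]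

lemma variance_le_integral_sub_sq {X : Ω → ℝ} (hX : AEStronglyMeasurable X μ) (c : ℝ) :
    Var[X; μ] ≤ ∫ ω, (X ω - c) ^ 2 ∂μ := by
  rw [← variance_sub_const hX c]
  exact variance_le_expectation_sq (hX.sub aestronglyMeasurable_const)

variable {σ₁ σ₂ : ℝ≥0}

lemma gaussianPDFReal_sq_le_mul (hσ₁ : σ₁ ≠ 0) (hσ : σ₁ ≤ σ₂) (m x : ℝ) :
    gaussianPDFReal m (σ₁ ^ 2) x ≤ σ₂ / σ₁ * gaussianPDFReal m (σ₂ ^ 2) x := by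
  have hσ₁' : (0 : ℝ) < σ₁ := by positivity
  have hσ₂' : (0 : ℝ) < σ₂ := hσ₁'.trans_le hσ
  have hsqrt (σ : ℝ≥0) : √(2 * π * ((σ ^ 2 : ℝ≥0) : ℝ)) = σ * √(2 * π) := by
    rw [NNReal.coe_pow, mul_comm, sqrt_mul (by positivity), sqrt_sq σ.coe_nonneg]
  have hexp : rexp (-(x - m) ^ 2 / (2 * ((σ₁ ^ 2 : ℝ≥0) : ℝ)))
      ≤ rexp (-(x - m) ^ 2 / (2 * ((σ₂ ^ 2 : ℝ≥0) : ℝ))) := by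
    rw [exp_le_exp, neg_div, neg_div, neg_le_neg_iff]
    gcongr
  simp only [gaussianPDFReal, hsqrt]
  calc (σ₁ * √(2 * π))⁻¹ * rexp (-(x - m) ^ 2 / (2 * ((σ₁ ^ 2 : ℝ≥0) : ℝ)))
      ≤ (σ₁ * √(2 * π))⁻¹ * rexp (-(x - m) ^ 2 / (2 * ((σ₂ ^ 2 : ℝ≥0) : ℝ))) := by gcongr
    _ = σ₂ / σ₁ * ((σ₂ * √(2 * π))⁻¹ * rexp (-(x - m) ^ 2 / (2 * ((σ₂ ^ 2 : ℝ≥0) : ℝ)))) := by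
        field_simp

lemma gaussianReal_sq_le_smul (hσ₁ : σ₁ ≠ 0) (hσ : σ₁ ≤ σ₂) (m : ℝ) :
    gaussianReal m (σ₁ ^ 2) ≤ (σ₂ / σ₁) • gaussianReal m (σ₂ ^ 2) := by
  have hσ₂ : σ₂ ≠ 0 := (pos_iff_ne_zero.2 hσ₁ |>.trans_le hσ).ne'
  rw [gaussianReal_of_var_ne_zero _ (pow_ne_zero 2 hσ₁),
    gaussianReal_of_var_ne_zero _ (pow_ne_zero 2 hσ₂), ← Measure.coe_nnreal_smul,
    ← withDensity_smul _ (measurable_gaussianPDF _ _)]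
  refine withDensity_mono (ae_of_all _ fun x ↦ ?_)
  rw [Pi.smul_apply, smul_eq_mul, gaussianPDF, gaussianPDF, ← ENNReal.ofReal_coe_nnreal,
    ← ENNReal.ofReal_mul (by positivity), NNReal.coe_div]
  exact ENNReal.ofReal_le_ofReal (gaussianPDFReal_sq_le_mul hσ₁ hσ m x)

end ProbabilityTheory

theorem gaussian_variance_comparison_general (σ₁ σ₂ : ℝ≥0) (h1 : 0 < σ₁) (h12 : σ₁ ≤ σ₂)
    (g : ℝ → ℝ)
    (hg1 : MemLp g 2 (gaussianReal 0 (σ₁ ^ 2)))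
    (hg2 : MemLp g 2 (gaussianReal 0 (σ₂ ^ 2))) :
    ∫ x, (g x)^2 ∂(gaussianReal 0 (σ₁ ^ 2)) -
        (∫ x, g x ∂(gaussianReal 0 (σ₁ ^ 2)))^2 ≤
      (σ₂ / σ₁ : ℝ) * (∫ x, (g x)^2 ∂(gaussianReal 0 (σ₂ ^ 2)) -
        (∫ x, g x ∂(gaussianReal 0 (σ₂ ^ 2)))^2) := by
  set m₂ := ∫ x, g x ∂(gaussianReal 0 (σ₂ ^ 2))
  calc _ = Var[g; gaussianReal 0 (σ₁ ^ 2)] := (variance_eq_sub hg1).symm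
    _ ≤ ∫ x, (g x - m₂) ^ 2 ∂(gaussianReal 0 (σ₁ ^ 2)) :=
        variance_le_integral_sub_sq hg1.aestronglyMeasurable m₂
    _ ≤ (σ₂ / σ₁ : ℝ≥0) * ∫ x, (g x - m₂) ^ 2 ∂(gaussianReal 0 (σ₂ ^ 2)) :=
        integral_le_mul_integral_of_le_smul (gaussianReal_sq_le_smul h1.ne' h12 0)
          (ae_of_all _ fun _ ↦ sq_nonneg _) (hg2.sub (memLp_const m₂)).integrable_sq
    _ = (σ₂ / σ₁ : ℝ) * Var[g; gaussianReal 0 (σ₂ ^ 2)] := by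
        rw [variance_eq_integral hg2.aemeasurable, NNReal.coe_div]
    _ = _ := by rw [variance_eq_sub hg2]; rfl

theorem gaussian_variance_comparison (σ₁ σ₂ : ℝ≥0) (h1 : 0 < σ₁) (h12 : σ₁ ≤ σ₂)
    (g : ℝ → ℝ) (hg : Measurable g) (hgbdd : ∃ C : ℝ, ∀ x, |g x| ≤ C)
    (hg1 : MemLp g 2 (gaussianReal 0 (σ₁ ^ 2)))
    (hg2 : MemLp g 2 (gaussianReal 0 (σ₂ ^ 2))) :
    ∫ x, (g x)^2 ∂(gaussianReal 0 (σ₁ ^ 2)) -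
        (∫ x, g x ∂(gaussianReal 0 (σ₁ ^ 2)))^2 ≤
      (σ₂ / σ₁ : ℝ) * (∫ x, (g x)^2 ∂(gaussianReal 0 (σ₂ ^ 2)) -
        (∫ x, g x ∂(gaussianReal 0 (σ₂ ^ 2)))^2) :=
  gaussian_variance_comparison_general σ₁ σ₂ h1 h12 g hg1 hg2
end

section
/- Let P and Q be probability measures on (Ω, 𝒜) with P ≪ Q, X : Ω → ℝ integrable with respect to both P and Q, and φ strictly convex on an interval containing the range of X, with ∫ φ(X) dQ < ∞ and ‖dP/dQ‖_∞ < ∞. Let A := { ω : (dP/dQ)(ω) = ‖dP/dQ‖_∞ }. If there is a constant c with X = c Q-a.e. on Ω \ A, Q(A) > 0, P(A) > 0, and c = ∫ X dQ = (1/Q(A)) ∫_A X dQ = ∫ X dP = (1/P(A)) ∫_A X dP, then equality holds in the Dragomir–Jensen inequality: ∫ φ(X) dP − φ(∫ X dP) = ‖dP/dQ‖_∞ · ( ∫ φ(X) dQ − φ(∫ X dQ) ). -/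
open MeasureTheory

/-!
Off the top level set `A` of `dP/dQ` the variable `X` is a.e. the constant `c`, so both Jensen gaps
reduce to integrals over `A` of `φ ∘ X - φ c`. On `A` the measure `P` is exactly
`‖dP/dQ‖_∞ • Q`, which turns the `P`-gap into `‖dP/dQ‖_∞` times the `Q`-gap.
-/

namespace MeasureTheory.Measure

variable {Ω : Type*} [MeasurableSpace Ω] {P Q : Measure Ω} [P.HaveLebesgueDecomposition Q]

theorem le_essSup_rnDeriv_smul (hPQ : P ≪ Q) : P ≤ essSup (P.rnDeriv Q) Q • Q := by
  calc P = Q.withDensity (P.rnDeriv Q) := (withDensity_rnDeriv_eq P Q hPQ).symm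
    _ ≤ Q.withDensity fun _ ↦ essSup (P.rnDeriv Q) Q := withDensity_mono ae_le_essSup
    _ = essSup (P.rnDeriv Q) Q • Q := withDensity_const _

theorem restrict_setOf_rnDeriv_eq (hPQ : P ≪ Q) (m : ENNReal) :
    P.restrict {ω | P.rnDeriv Q ω = m} = m • Q.restrict {ω | P.rnDeriv Q ω = m} := by
  have hA : MeasurableSet {ω | P.rnDeriv Q ω = m} :=
    measurable_rnDeriv P Q (measurableSet_singleton m)
  calc P.restrict {ω | P.rnDeriv Q ω = m}
      = (Q.restrict {ω | P.rnDeriv Q ω = m}).withDensity (P.rnDeriv Q) := by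
        rw [← restrict_withDensity hA, withDensity_rnDeriv_eq P Q hPQ]
    _ = (Q.restrict {ω | P.rnDeriv Q ω = m}).withDensity fun _ ↦ m :=
        withDensity_congr_ae ((ae_restrict_mem hA).mono fun _ hω ↦ hω)
    _ = m • Q.restrict {ω | P.rnDeriv Q ω = m} := withDensity_const m

end MeasureTheory.Measure

theorem MeasureTheory.integral_sub_const_eq_setIntegral {Ω : Type*} [MeasurableSpace Ω]
    {μ : Measure Ω} [IsProbabilityMeasure μ] {f : Ω → ℝ} (hf : Integrable f μ) {A : Set Ω}
    (hA : MeasurableSet A) {a : ℝ} (hfA : ∀ᵐ ω ∂(μ.restrict Aᶜ), f ω = a) :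
    ∫ ω, f ω ∂μ - a = ∫ ω in A, (f ω - a) ∂μ := by
  rw [setIntegral_eq_integral_of_ae_compl_eq_zero, integral_sub hf (integrable_const a),
    integral_const, probReal_univ, one_smul]
  filter_upwards [(ae_restrict_iff' hA.compl).1 hfA] with ω hω hωA using sub_eq_zero.2 (hω hωA)

theorem dragomir_jensen_equality_sufficiency_general {Ω : Type*} [MeasurableSpace Ω]
    (P Q : Measure Ω) [IsProbabilityMeasure P] [IsProbabilityMeasure Q]
    (hPQ : P ≪ Q) (hbdd : essSup (P.rnDeriv Q) Q ≠ ⊤)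
    (X : Ω → ℝ)
    (φ : ℝ → ℝ)
    (hφQ : Integrable (fun ω => φ (X ω)) Q)
    (A : Set Ω) (hA : A = {ω | P.rnDeriv Q ω = essSup (P.rnDeriv Q) Q})
    (c : ℝ)
    (hconst : ∀ᵐ ω ∂(Q.restrict Aᶜ), X ω = c)
    (hcQ : c = ∫ ω, X ω ∂Q)
    (hcP : c = ∫ ω, X ω ∂P) :
    ∫ ω, φ (X ω) ∂P - φ (∫ ω, X ω ∂P) =
      (essSup (P.rnDeriv Q) Q).toReal *
        (∫ ω, φ (X ω) ∂Q - φ (∫ ω, X ω ∂Q)) := by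
  have hAmeas : MeasurableSet A :=
    hA ▸ Measure.measurable_rnDeriv P Q (measurableSet_singleton _)
  have hφP : Integrable (fun ω => φ (X ω)) P :=
    (hφQ.smul_measure hbdd).mono_measure (Measure.le_essSup_rnDeriv_smul hPQ)
  have hφconst : ∀ᵐ ω ∂(Q.restrict Aᶜ), φ (X ω) = φ c := hconst.mono fun _ h ↦ congrArg φ h
  rw [← hcP, ← hcQ, integral_sub_const_eq_setIntegral hφP hAmeas ((hPQ.restrict Aᶜ) hφconst),
    integral_sub_const_eq_setIntegral hφQ hAmeas hφconst, hA,
    Measure.restrict_setOf_rnDeriv_eq hPQ, integral_smul_measure, smul_eq_mul]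

theorem dragomir_jensen_equality_sufficiency {Ω : Type*} [MeasurableSpace Ω]
    (P Q : Measure Ω) [IsProbabilityMeasure P] [IsProbabilityMeasure Q]
    (hPQ : P ≪ Q) (hbdd : essSup (P.rnDeriv Q) Q ≠ ⊤)
    (X : Ω → ℝ) (hXP : Integrable X P) (hXQ : Integrable X Q)
    (s : Set ℝ) (φ : ℝ → ℝ) (hφ : StrictConvexOn ℝ s φ)
    (hrange : ∀ ω, X ω ∈ s)
    (hφQ : Integrable (fun ω => φ (X ω)) Q)
    (A : Set Ω) (hA : A = {ω | P.rnDeriv Q ω = essSup (P.rnDeriv Q) Q})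
    (c : ℝ)
    (hconst : ∀ᵐ ω ∂(Q.restrict Aᶜ), X ω = c)
    (hQA : 0 < Q A) (hPA : 0 < P A)
    (hcQ : c = ∫ ω, X ω ∂Q)
    (hcQA : c = ((Q A).toReal)⁻¹ * ∫ ω in A, X ω ∂Q)
    (hcP : c = ∫ ω, X ω ∂P)
    (hcPA : c = ((P A).toReal)⁻¹ * ∫ ω in A, X ω ∂P) :
    ∫ ω, φ (X ω) ∂P - φ (∫ ω, X ω ∂P) =
      (essSup (P.rnDeriv Q) Q).toReal *
        (∫ ω, φ (X ω) ∂Q - φ (∫ ω, X ω ∂Q)) :=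
  dragomir_jensen_equality_sufficiency_general P Q hPQ hbdd X φ hφQ A hA c hconst hcQ hcP
end
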